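/- arXiv:2008.11570 — 3 statements merged into one kernel-verified Lean document; each statement's English description precedes it below -/
import Mathlib

section
/- Let (Y_1,…,Y_n) be an n-exchangeable sequence of random variables taking values in a measurable space S, with joint law μ. Let I_1, I_2, … be i.i.d. uniform on {1,…,n}, independent of Y, and define Z_k := Y_{I_k}. Then for every m with 1 ≤ m ≤ n, the total variation distance between the law of (Y_1,…,Y_m) and the law of (Z_1,…,Z_m) is at most m(m−1)/(2n). -/
open MeasureTheory
open scoped ENNReal NNReal

/-- Weierstrass product inequality: `1 - ∑ aᵢ ≤ ∏ (1 - aᵢ)` for `aᵢ ∈ [0,1]`. -/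
lemma df_weierstrass {ι : Type*} (s : Finset ι) (a : ι → ℝ)
    (h0 : ∀ i ∈ s, 0 ≤ a i) (h1 : ∀ i ∈ s, a i ≤ 1) :
    1 - ∑ i ∈ s, a i ≤ ∏ i ∈ s, (1 - a i) := by
  classical
  induction s using Finset.cons_induction with
  | empty => simp
  | cons i s his ih =>
    rw [Finset.sum_cons, Finset.prod_cons]
    have h0i := h0 i (Finset.mem_cons_self i s)
    have h1i := h1 i (Finset.mem_cons_self i s)
    have h0s : ∀ j ∈ s, 0 ≤ a j := fun j hj => h0 j (Finset.mem_cons_of_mem hj)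
    have h1s : ∀ j ∈ s, a j ≤ 1 := fun j hj => h1 j (Finset.mem_cons_of_mem hj)
    have ihs := ih h0s h1s
    have hsum : 0 ≤ ∑ j ∈ s, a j := Finset.sum_nonneg h0s
    nlinarith [mul_le_mul_of_nonneg_left ihs (by linarith : (0:ℝ) ≤ 1 - a i)]

/-- Diaconis–Freedman finite de Finetti bound: if `μ` is the (exchangeable) joint law of
`(Y_1,…,Y_n)`, then the law of its first `m` coordinates is within total variation
distance `m(m-1)/(2n)` of the law of `(Z_1,…,Z_m)`, where `Z_k := Y_{I_k}` for
i.i.d. uniform indices `I_k`; the latter law is the uniform average of the pushforwards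
of `μ` under all index maps `φ : Fin m → Fin n`. -/
theorem diaconis_freedman_bound
    {S : Type*} [MeasurableSpace S] (n m : ℕ) (hn : 0 < n) (hm : 1 ≤ m) (hmn : m ≤ n)
    (μ : Measure (Fin n → S)) [IsProbabilityMeasure μ]
    (hexch : ∀ σ : Equiv.Perm (Fin n), Measure.map (fun y => y ∘ σ) μ = μ) :
    ∀ A : Set (Fin m → S), MeasurableSet A →
      |(Measure.map (fun y : Fin n → S => fun i : Fin m => y (Fin.castLE hmn i)) μ A).toReal
          - ((((n : ℝ≥0∞) ^ m)⁻¹ •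
              ∑ φ : Fin m → Fin n, Measure.map (fun y : Fin n → S => y ∘ φ) μ) A).toReal|
        ≤ (m : ℝ) * ((m : ℝ) - 1) / (2 * (n : ℝ)) := by
  classical
  intro A hA
  set c : (Fin n → S) → (Fin m → S) := fun y i => y (Fin.castLE hmn i) with hc
  have hmc : Measurable c := measurable_pi_lambda _ fun i => measurable_pi_apply _
  have hmφ : ∀ φ : Fin m → Fin n, Measurable (fun y : Fin n → S => y ∘ φ) :=
    fun φ => measurable_pi_lambda _ fun i => measurable_pi_apply _
  set ν : Measure (Fin m → S) := Measure.map c μ with hν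
  set μφ : (Fin m → Fin n) → Measure (Fin m → S) :=
    fun φ => Measure.map (fun y : Fin n → S => y ∘ φ) μ with hμφ
  -- for injective φ the pushforward agrees with ν, by exchangeability
  have key : ∀ φ : Fin m → Fin n, Function.Injective φ → μφ φ = ν := by
    intro φ hφ
    have hci : Function.Injective (Fin.castLE hmn) := Fin.castLE_injective hmn
    let e : {x // x ∈ Set.range (Fin.castLE hmn)} ≃ {x // x ∈ Set.range φ} :=
      (Equiv.ofInjective _ hci).symm.trans (Equiv.ofInjective φ hφ)
    let σ : Equiv.Perm (Fin n) := e.extendSubtype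
    have hσ : ∀ i : Fin m, σ (Fin.castLE hmn i) = φ i := by
      intro i
      have hx : Fin.castLE hmn i ∈ Set.range (Fin.castLE hmn) := ⟨i, rfl⟩
      rw [Equiv.extendSubtype_apply_of_mem e _ hx]
      have h5 : (⟨Fin.castLE hmn i, hx⟩ : {x // x ∈ Set.range (Fin.castLE hmn)})
          = Equiv.ofInjective _ hci i := rfl
      rw [h5]
      simp only [e, Equiv.trans_apply, Equiv.symm_apply_apply, Equiv.ofInjective_apply]
      congr 1
      exact (Equiv.symm_apply_eq _).mpr rfl
    have hcomp : (fun y : Fin n → S => y ∘ φ)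
        = c ∘ (fun y : Fin n → S => y ∘ σ) := by
      funext y
      funext i
      simp [c, hσ i]
    rw [hμφ] at *
    calc Measure.map (fun y : Fin n → S => y ∘ φ) μ
        = Measure.map c (Measure.map (fun y : Fin n → S => y ∘ σ) μ) := by
          rw [Measure.map_map hmc (measurable_pi_lambda _ fun i => measurable_pi_apply _), ← hcomp]
      _ = ν := by rw [hexch σ]
  -- probability measures, finiteness
  have hνprob : IsProbabilityMeasure ν := Measure.isProbabilityMeasure_map hmc.aemeasurable
  have hμφprob : ∀ φ, IsProbabilityMeasure (μφ φ) :=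
    fun φ => Measure.isProbabilityMeasure_map (hmφ φ).aemeasurable
  have hν1 : ν A ≤ 1 := prob_le_one
  have hμφ1 : ∀ φ, μφ φ A ≤ 1 := fun φ => prob_le_one
  -- numeric abbreviation
  have hnm_pos : (0:ℝ) < (n:ℝ) ^ m := by positivity
  -- rewrite the averaged measure applied to A
  have havg : ((((n : ℝ≥0∞) ^ m)⁻¹ • ∑ φ : Fin m → Fin n, μφ φ) A).toReal
      = ((n:ℝ) ^ m)⁻¹ * ∑ φ : Fin m → Fin n, (μφ φ A).toReal := by
    rw [Measure.smul_apply, Measure.finset_sum_apply, smul_eq_mul, ENNReal.toReal_mul,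
      ENNReal.toReal_inv, ENNReal.toReal_pow, ENNReal.toReal_natCast,
      ENNReal.toReal_sum]
    intro φ _
    exact ((hμφ1 φ).trans_lt ENNReal.one_lt_top).ne
  -- the first measure as an average of itself
  have hconst : (ν A).toReal
      = ((n:ℝ) ^ m)⁻¹ * ∑ _φ : Fin m → Fin n, (ν A).toReal := by
    rw [Finset.sum_const, Finset.card_univ, Fintype.card_fun, Fintype.card_fin,
      Fintype.card_fin, nsmul_eq_mul]
    push_cast
    field_simp
  rw [havg, hconst, ← mul_sub, ← Finset.sum_sub_distrib, abs_mul,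
    abs_of_nonneg (by positivity : (0:ℝ) ≤ ((n:ℝ)^m)⁻¹)]
  -- bound the sum
  set r : (Fin m → Fin n) → ℝ := fun φ => (ν A).toReal - (μφ φ A).toReal with hr
  have hrzero : ∀ φ, Function.Injective φ → r φ = 0 := by
    intro φ hφ; simp [r, key φ hφ]
  have hrabs : ∀ φ, |r φ| ≤ 1 := by
    intro φ
    have h1 : (ν A).toReal ≤ 1 := by
      simpa using ENNReal.toReal_mono ENNReal.one_ne_top hν1
    have h2 : (μφ φ A).toReal ≤ 1 := by
      simpa using ENNReal.toReal_mono ENNReal.one_ne_top (hμφ1 φ)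
    have h3 : 0 ≤ (ν A).toReal := ENNReal.toReal_nonneg
    have h4 : 0 ≤ (μφ φ A).toReal := ENNReal.toReal_nonneg
    rw [abs_le]; constructor <;> simp [r] <;> linarith
  set B := Finset.univ.filter (fun φ : Fin m → Fin n => ¬ Function.Injective φ) with hB
  have hsum_eq : ∑ φ : Fin m → Fin n, r φ = ∑ φ ∈ B, r φ := by
    rw [hB]
    refine (Finset.sum_filter_of_ne ?_).symm
    intro φ _ hne
    intro hφ
    exact hne (hrzero φ hφ)
  have habs : |∑ φ : Fin m → Fin n, r φ| ≤ (B.card : ℝ) := by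
    rw [hsum_eq]
    calc |∑ φ ∈ B, r φ| ≤ ∑ φ ∈ B, |r φ| := Finset.abs_sum_le_sum_abs _ _
      _ ≤ ∑ _φ ∈ B, (1:ℝ) := Finset.sum_le_sum fun φ _ => hrabs φ
      _ = (B.card : ℝ) := by simp
  -- cardinality of non-injective maps
  have hcard_inj : (Finset.univ.filter
      (fun φ : Fin m → Fin n => Function.Injective φ)).card = n.descFactorial m := by
    rw [← Fintype.card_subtype]
    rw [Fintype.card_congr (Equiv.subtypeInjectiveEquivEmbedding (Fin m) (Fin n))]
    rw [Fintype.card_embedding_eq, Fintype.card_fin, Fintype.card_fin]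
  have hcardB : (B.card : ℝ) = (n:ℝ)^m - (n.descFactorial m : ℝ) := by
    have : (Finset.univ.filter
        (fun φ : Fin m → Fin n => Function.Injective φ)).card + B.card
        = Fintype.card (Fin m → Fin n) := by
      rw [hB, ← Finset.card_univ]
      exact Finset.card_filter_add_card_filter_not _
    rw [Fintype.card_fun, Fintype.card_fin, Fintype.card_fin, hcard_inj] at this
    have h2 : (n.descFactorial m : ℝ) + (B.card : ℝ) = (n:ℝ)^m := by
      exact_mod_cast congrArg (Nat.cast : ℕ → ℝ) this
    linarith
  calc ((n:ℝ)^m)⁻¹ * |∑ φ : Fin m → Fin n, r φ|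
      ≤ ((n:ℝ)^m)⁻¹ * (B.card : ℝ) := by
        exact mul_le_mul_of_nonneg_left habs (by positivity)
    _ = 1 - (n.descFactorial m : ℝ) / (n:ℝ)^m := by
        rw [hcardB]; field_simp
    _ ≤ (m : ℝ) * ((m : ℝ) - 1) / (2 * (n : ℝ)) := by
        -- descFactorial as a product, then Weierstrass
        have hdf : (n.descFactorial m : ℝ) / (n:ℝ)^m
            = ∏ i ∈ Finset.range m, (1 - (i:ℝ)/(n:ℝ)) := by
          rw [Nat.descFactorial_eq_prod_range, Nat.cast_prod]
          rw [show ((n:ℝ))^m = ∏ _i ∈ Finset.range m, (n:ℝ) by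
            rw [Finset.prod_const, Finset.card_range]]
          rw [← Finset.prod_div_distrib]
          refine Finset.prod_congr rfl fun i hi => ?_
          have hin : i ≤ n := le_trans (Finset.mem_range.1 hi).le hmn
          have hn0 : (n:ℝ) ≠ 0 := by positivity
          rw [Nat.cast_sub hin, sub_div, div_self hn0]
        have hW : 1 - ∑ i ∈ Finset.range m, (i:ℝ)/(n:ℝ)
            ≤ ∏ i ∈ Finset.range m, (1 - (i:ℝ)/(n:ℝ)) := by
          refine df_weierstrass _ _ (fun i _ => by positivity) fun i hi => ?_
          have hin : (i:ℝ) ≤ (n:ℝ) := by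
            exact_mod_cast le_trans (Finset.mem_range.1 hi).le hmn
          rw [div_le_one (by exact_mod_cast hn)]
          exact hin
        have hgauss : ∑ i ∈ Finset.range m, (i:ℝ)/(n:ℝ)
            = (m : ℝ) * ((m : ℝ) - 1) / (2 * (n : ℝ)) := by
          rw [← Finset.sum_div]
          have hc := congrArg (Nat.cast : ℕ → ℝ) (Finset.sum_range_id_mul_two m)
          push_cast [Nat.cast_sub hm] at hc
          have hn0 : (n:ℝ) ≠ 0 := by positivity
          have hs : (∑ x ∈ Finset.range m, (x:ℝ)) = (m:ℝ) * ((m:ℝ) - 1) / 2 := by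
            linarith
          rw [hs]
          field_simp
        rw [hdf, ← hgauss]
        linarith [hW]
end

section
/- Let 𝕌 and 𝕐 be standard Borel spaces, let Q be a fixed Borel probability measure on 𝕐, and let ℛ be the set of Borel probability measures P on 𝕌 × 𝕐 whose marginal on 𝕐 equals Q. Then ℛ is convex, and the extreme points of ℛ are exactly the measures of the form P(B) = ∫ 1_{(g(y), y) ∈ B} Q(dy) for some Borel measurable function g : 𝕐 → 𝕌. -/
/-!
Convexity is linearity of the marginal. A deterministic policy `P = Q.map (g ·, ·)` is extreme
because any `P₁` with `a • P₁ ≤ P` is absolutely continuous w.r.t. `P`, hence lives on the graph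
of `g`, and a measure with marginal `Q` living on that graph is `P`.

Conversely, disintegrate an extreme `P` as `Q ⊗ κ` (swapped). For a measurable `A`, with
`p = κ y A`, the kernels `κ|_A + (1 - p) • κ` and `κ|_{Aᶜ} + p • κ` are Markov and average to `κ`,
so extremality forces them to agree; comparing their masses of `A`, `p + (1 - p) p = p ^ 2`, gives
`p ∈ {0, 1}` a.e. Applied to a countable separating family of sets this makes `κ y` a Dirac mass
`δ (g y)` for a.e. `y`, and `g` is made measurable by reading it off as the mean of a measurable
embedding `U → ℝ` under `κ y`.
-/

open MeasureTheory
open scoped ENNReal NNReal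

/-- The set of probability measures on `U × Y` whose second marginal equals `Q`. -/
def fixedMarginalSet (U Y : Type*) [MeasurableSpace U] [MeasurableSpace Y]
    (Q : Measure Y) : Set (Measure (U × Y)) :=
  {P | IsProbabilityMeasure P ∧ Measure.map Prod.snd P = Q}

open ProbabilityTheory

namespace MeasureTheory.Measure

variable {α : Type*} [MeasurableSpace α]

theorem eq_dirac_of_ae_eq [MeasurableSingletonClass α] {μ : Measure α} [IsProbabilityMeasure μ]
    {x : α} (h : ∀ᵐ y ∂μ, y = x) : μ = dirac x := by
  have hx : μ {x} = 1 := (mem_ae_iff_prob_eq_one (measurableSet_singleton x)).1 h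
  have hμ := (ae_mem_finset_iff (s := {x})).1 (by simpa using h)
  rwa [Finset.sum_singleton, hx, one_smul] at hμ

theorem exists_eq_dirac_of_seq_separating [MeasurableSingletonClass α] (μ : Measure α)
    [IsProbabilityMeasure μ] {A : ℕ → Set α} (hA : ∀ n, MeasurableSet (A n))
    (hsep : ∀ x y, (∀ n, x ∈ A n ↔ y ∈ A n) → x = y) (h01 : ∀ n, μ (A n) = 0 ∨ μ (A n) = 1) :
    ∃ x, μ = dirac x := by
  have hdecided : ∀ᵐ y ∂μ, ∀ n, y ∈ A n ↔ μ (A n) = 1 := by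
    refine ae_all_iff.2 fun n => ?_
    rcases h01 n with h | h
    · filter_upwards [measure_eq_zero_iff_ae_notMem.1 h] with y hy
      simp [hy, h]
    · filter_upwards [(mem_ae_iff_prob_eq_one (hA n)).2 h] with y hy
      simp [hy, h]
  obtain ⟨x, hx⟩ := hdecided.exists
  refine ⟨x, eq_dirac_of_ae_eq ?_⟩
  filter_upwards [hdecided] with y hy using hsep y x fun n => (hy n).trans (hx n).symm

end MeasureTheory.Measure

namespace ProbabilityTheory.Kernel

variable {Y U : Type*} [MeasurableSpace Y] [MeasurableSpace U] {Q : Measure Y}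

theorem ae_exists_eq_dirac_of_ae_zero_or_one [MeasurableSingletonClass U]
    [MeasurableSpace.CountablySeparated U] (κ : Kernel Y U) [IsMarkovKernel κ]
    (h01 : ∀ A, MeasurableSet A → ∀ᵐ y ∂Q, κ y A = 0 ∨ κ y A = 1) :
    ∀ᵐ y ∂Q, ∃ u, κ y = Measure.dirac u := by
  obtain ⟨A, hA, hsep⟩ := exists_seq_separating U MeasurableSet.univ Set.univ
  filter_upwards [ae_all_iff.2 fun n => h01 (A n) (hA n)] with y hy
  exact (κ y).exists_eq_dirac_of_seq_separating hA
    (fun x z => hsep x trivial z trivial) hy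

theorem exists_measurable_ae_eq_dirac [StandardBorelSpace U] [Nonempty U] (κ : Kernel Y U)
    (h : ∀ᵐ y ∂Q, ∃ u, κ y = Measure.dirac u) :
    ∃ g : Y → U, Measurable g ∧ ∀ᵐ y ∂Q, κ y = Measure.dirac (g y) := by
  set e := embeddingReal U
  have he := measurableEmbedding_embeddingReal U
  obtain ⟨e', he', he'e⟩ := he.exists_measurable_extend measurable_id fun _ => inferInstance
  refine ⟨fun y => e' (∫ u, e u ∂κ y),
    he'.comp (he.measurable.stronglyMeasurable.integral_kernel).measurable, ?_⟩
  filter_upwards [h] with y ⟨u, hu⟩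
  rw [hu, integral_dirac, ← Function.comp_apply (f := e'), he'e, id]

noncomputable def tiltToward (κ : Kernel Y U) {A : Set U} (hA : MeasurableSet A) :
    Kernel Y U where
  toFun y := (κ y).restrict A + κ y Aᶜ • κ y
  measurable' := Measure.measurable_of_measurable_coe _ fun s hs => by
    simp only [Measure.coe_add, Measure.coe_smul, Pi.add_apply, Pi.smul_apply, smul_eq_mul,
      Measure.restrict_apply hs]
    exact (κ.measurable_coe (hs.inter hA)).add
      ((κ.measurable_coe hA.compl).mul (κ.measurable_coe hs))

variable {κ : Kernel Y U} {A : Set U} (hA : MeasurableSet A)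

theorem tiltToward_apply' (y : Y) {s : Set U} (hs : MeasurableSet s) :
    tiltToward κ hA y s = κ y (s ∩ A) + κ y Aᶜ * κ y s := by
  simp [tiltToward, Measure.restrict_apply hs]

instance [IsMarkovKernel κ] : IsMarkovKernel (tiltToward κ hA) :=
  ⟨fun y => ⟨by rw [tiltToward_apply' hA y .univ, Set.univ_inter, measure_univ, mul_one,
    measure_add_measure_compl hA, measure_univ]⟩⟩

theorem tiltToward_add_tiltToward_compl [IsMarkovKernel κ] :
    tiltToward κ hA + tiltToward κ hA.compl = κ + κ := by
  ext y s hs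
  simp only [FunLike.coe_add, Pi.add_apply, Measure.coe_add, tiltToward_apply' _ y hs,
    compl_compl]
  calc κ y (s ∩ A) + κ y Aᶜ * κ y s + (κ y (s ∩ Aᶜ) + κ y A * κ y s)
      = (κ y (s ∩ A) + κ y (s ∩ Aᶜ)) + (κ y A + κ y Aᶜ) * κ y s := by ring
    _ = κ y s + κ y s := by
      rw [← Set.sdiff_eq, measure_inter_add_sdiff s hA, measure_add_measure_compl hA,
        measure_univ, one_mul]

theorem tiltToward_apply_self (y : Y) :
    tiltToward κ hA y A = κ y A + κ y Aᶜ * κ y A := by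
  rw [tiltToward_apply' hA y hA, Set.inter_self]

theorem tiltToward_compl_apply (y : Y) :
    tiltToward κ hA.compl y A = κ y A * κ y A := by
  rw [tiltToward_apply' hA.compl y hA, Set.inter_compl_self, measure_empty, compl_compl, zero_add]

end ProbabilityTheory.Kernel

theorem ENNReal.eq_zero_or_eq_one_of_add_mul_eq_mul_self {p q : ℝ≥0∞} (hpq : p + q = 1)
    (h : p + q * p = p * p) : p = 0 ∨ p = 1 := by
  lift p to ℝ≥0 using ne_top_of_le_ne_top ENNReal.one_ne_top (hpq ▸ le_self_add)
  lift q to ℝ≥0 using ne_top_of_le_ne_top ENNReal.one_ne_top (hpq ▸ le_add_self)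
  have hpq' : (p : ℝ) + q = 1 := by exact_mod_cast hpq
  have h' : (p : ℝ) + q * p = p * p := by exact_mod_cast h
  rcases mul_eq_zero.1 (show (p : ℝ) * q = 0 by nlinarith) with hp | hq
  · left; exact_mod_cast hp
  · right; exact_mod_cast (show (p : ℝ) = 1 by linarith)

section FixedMarginal

variable {U Y : Type*} [MeasurableSpace U] [MeasurableSpace Y] {Q : Measure Y}

theorem smul_add_smul_mem_fixedMarginalSet {P₁ P₂ : Measure (U × Y)}
    (h₁ : P₁ ∈ fixedMarginalSet U Y Q) (h₂ : P₂ ∈ fixedMarginalSet U Y Q) {a b : ℝ≥0∞}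
    (hab : a + b = 1) : a • P₁ + b • P₂ ∈ fixedMarginalSet U Y Q := by
  obtain ⟨hP₁, hm₁⟩ := h₁
  obtain ⟨hP₂, hm₂⟩ := h₂
  refine ⟨⟨by simp [hab]⟩, ?_⟩
  rw [Measure.map_add _ _ measurable_snd, Measure.map_smul, Measure.map_smul, hm₁, hm₂,
    ← add_smul, hab, one_smul]

theorem map_swap_compProd_mem_fixedMarginalSet [IsProbabilityMeasure Q] (κ : Kernel Y U)
    [IsMarkovKernel κ] : (Q ⊗ₘ κ).map Prod.swap ∈ fixedMarginalSet U Y Q :=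
  ⟨Measure.isProbabilityMeasure_map measurable_swap.aemeasurable,
    by rw [← Measure.snd, Measure.snd_map_swap, Measure.fst_compProd]⟩

theorem exists_markovKernel_eq_map_swap_compProd [StandardBorelSpace U] [Nonempty U]
    {P : Measure (U × Y)} (hP : P ∈ fixedMarginalSet U Y Q) :
    ∃ κ : Kernel Y U, IsMarkovKernel κ ∧ P = (Q ⊗ₘ κ).map Prod.swap := by
  obtain ⟨hP_prob, hPQ⟩ := hP
  have hfst : (P.map Prod.swap).fst = Q := by rw [Measure.fst_map_swap, ← hPQ]; rfl
  refine ⟨(P.map Prod.swap).condKernel, inferInstance, ?_⟩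
  rw [← hfst, Measure.disintegrate, Measure.map_map measurable_swap measurable_swap,
    Prod.swap_swap_eq, Measure.map_id]

theorem ae_zero_or_one_of_midpoint_extreme [IsProbabilityMeasure Q] {κ : Kernel Y U}
    [IsMarkovKernel κ] (hext : ∀ P₁ ∈ fixedMarginalSet U Y Q, ∀ P₂ ∈ fixedMarginalSet U Y Q,
      (Q ⊗ₘ κ).map Prod.swap = (2⁻¹ : ℝ≥0∞) • P₁ + (2⁻¹ : ℝ≥0∞) • P₂ → P₁ = P₂)
    {A : Set U} (hA : MeasurableSet A) : ∀ᵐ y ∂Q, κ y A = 0 ∨ κ y A = 1 := by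
  set κ₁ := Kernel.tiltToward κ hA
  set κ₂ := Kernel.tiltToward κ hA.compl
  have hmid : (Q ⊗ₘ κ).map Prod.swap =
      (2⁻¹ : ℝ≥0∞) • (Q ⊗ₘ κ₁).map Prod.swap + (2⁻¹ : ℝ≥0∞) • (Q ⊗ₘ κ₂).map Prod.swap := by
    rw [← smul_add, ← Measure.map_add _ _ measurable_swap, ← Measure.compProd_add_right,
      Kernel.tiltToward_add_tiltToward_compl, Measure.compProd_add_right, ← two_smul ℝ≥0∞,
      Measure.map_smul, smul_smul, ENNReal.inv_mul_cancel two_ne_zero ENNReal.ofNat_ne_top,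
      one_smul]
  have heq : Q ⊗ₘ κ₁ = Q ⊗ₘ κ₂ := by
    have := congrArg (Measure.map Prod.swap) (hext _ (map_swap_compProd_mem_fixedMarginalSet κ₁)
      _ (map_swap_compProd_mem_fixedMarginalSet κ₂) hmid)
    simpa [Measure.map_map measurable_swap measurable_swap] using this
  have hint : ∫⁻ y, κ₁ y A ∂Q = ∫⁻ y, κ₂ y A ∂Q := by
    simpa [Measure.compProd_apply_prod MeasurableSet.univ hA] using
      congrArg (fun P => P (Set.univ ×ˢ A)) heq
  have hle : ∀ y, κ₂ y A ≤ κ₁ y A := fun y => by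
    rw [Kernel.tiltToward_apply_self hA, Kernel.tiltToward_compl_apply hA]
    exact (mul_le_of_le_one_right zero_le prob_le_one).trans le_self_add
  have hfin : ∫⁻ y, κ₂ y A ∂Q ≠ ∞ :=
    ((lintegral_mono fun y => prob_le_one).trans_lt (by simp)).ne
  have hae : (fun y => κ₂ y A) =ᵐ[Q] fun y => κ₁ y A :=
    ae_eq_of_ae_le_of_lintegral_le (.of_forall hle) hfin (κ₁.measurable_coe hA).aemeasurable
      hint.le
  filter_upwards [hae] with y hy
  rw [Kernel.tiltToward_apply_self hA, Kernel.tiltToward_compl_apply hA] at hy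
  exact ENNReal.eq_zero_or_eq_one_of_add_mul_eq_mul_self
    (by rw [measure_add_measure_compl hA, measure_univ]) hy.symm

end FixedMarginal

section Graph

variable {U Y : Type*} [MeasurableSpace U] [MeasurableSpace Y] {Q : Measure Y}
  {g : Y → U}

theorem eq_map_graph_of_absolutelyContinuous (hg : Measurable g) {P : Measure (U × Y)}
    [IsFiniteMeasure P] (hPQ : P.map Prod.snd = Q) (hac : P ≪ Q.map fun y => (g y, y)) :
    P = Q.map fun y => (g y, y) := by
  have hφ : Measurable fun y => (g y, y) := hg.prodMk measurable_id
  have hP_le : P ≤ Q.map fun y => (g y, y) := Measure.le_intro fun s hs _ => by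
    set B : Set (U × Y) := Prod.snd ⁻¹' ((fun y => (g y, y)) ⁻¹' s)
    have hB : MeasurableSet B := measurable_snd (hφ hs)
    -- `s \ B` misses the graph of `g`, which carries `Q.map (g ·, ·)`
    have hoff : P (s \ B) = 0 := hac <| by
      rw [Measure.map_apply hφ (hs.diff hB)]
      simp [B, Set.preimage_sdiff, Set.preimage_preimage]
    calc P s = P (s ∩ B) + P (s \ B) := (measure_inter_add_sdiff s hB).symm
      _ ≤ P B := by rw [hoff, add_zero]; exact measure_mono Set.inter_subset_right
      _ = Q.map (fun y => (g y, y)) s := by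
        rw [← Measure.map_apply measurable_snd (hφ hs), hPQ, Measure.map_apply hφ hs]
  refine Measure.eq_of_le_of_measure_univ_eq hP_le ?_
  rw [Measure.map_apply hφ .univ, Set.preimage_univ, ← hPQ,
    Measure.map_apply measurable_snd .univ, Set.preimage_univ]

theorem map_graph_mem_fixedMarginalSet [IsProbabilityMeasure Q] (hg : Measurable g) :
    Q.map (fun y => (g y, y)) ∈ fixedMarginalSet U Y Q := by
  have hφ : Measurable fun y => (g y, y) := hg.prodMk measurable_id
  refine ⟨Measure.isProbabilityMeasure_map hφ.aemeasurable, ?_⟩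
  rw [Measure.map_map measurable_snd hφ]
  exact Measure.map_id

theorem eq_map_graph_of_eq_smul_add_smul (hg : Measurable g) {P₁ P₂ : Measure (U × Y)}
    (h₁ : P₁ ∈ fixedMarginalSet U Y Q) {a b : ℝ≥0∞} (ha : a ≠ 0)
    (h : Q.map (fun y => (g y, y)) = a • P₁ + b • P₂) : P₁ = Q.map fun y => (g y, y) :=
  have := h₁.1
  eq_map_graph_of_absolutelyContinuous hg h₁.2 <| h ▸
    ((Measure.absolutelyContinuous_smul ha).add_right _)

theorem map_swap_compProd_eq_map_graph [SFinite Q] {κ : Kernel Y U} [IsSFiniteKernel κ]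
    (hg : Measurable g) (hκ : ∀ᵐ y ∂Q, κ y = Measure.dirac (g y)) :
    (Q ⊗ₘ κ).map Prod.swap = Q.map fun y => (g y, y) := by
  have hκg : κ =ᵐ[Q] Kernel.deterministic g hg := by
    filter_upwards [hκ] with y hy
    rw [hy, Kernel.deterministic_apply]
  rw [Measure.compProd_congr hκg, Measure.compProd_deterministic,
    Measure.map_map measurable_swap (measurable_id'.prodMk hg)]
  rfl

end Graph

theorem fixedMarginal_convex_and_extreme_points_general
    {U Y : Type*} [MeasurableSpace U] [StandardBorelSpace U]
    [MeasurableSpace Y]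
    (Q : Measure Y) [IsProbabilityMeasure Q] :
    (∀ P₁ ∈ fixedMarginalSet U Y Q, ∀ P₂ ∈ fixedMarginalSet U Y Q,
        ∀ a b : ℝ≥0∞, a + b = 1 → a • P₁ + b • P₂ ∈ fixedMarginalSet U Y Q) ∧
    {P ∈ fixedMarginalSet U Y Q |
        ∀ P₁ ∈ fixedMarginalSet U Y Q, ∀ P₂ ∈ fixedMarginalSet U Y Q,
          ∀ a b : ℝ≥0∞, a + b = 1 → a ≠ 0 → b ≠ 0 → P = a • P₁ + b • P₂ → P₁ = P₂}
      = {P | ∃ g : Y → U, Measurable g ∧ P = Measure.map (fun y => (g y, y)) Q} := by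
  refine ⟨fun P₁ h₁ P₂ h₂ a b hab => smul_add_smul_mem_fixedMarginalSet h₁ h₂ hab, ?_⟩
  ext P
  constructor
  · rintro ⟨hP, hext⟩
    have := hP.1
    have : Nonempty U := (nonempty_of_isProbabilityMeasure P).map Prod.fst
    obtain ⟨κ, hκ, rfl⟩ := exists_markovKernel_eq_map_swap_compProd hP
    have h01 := fun A (hA : MeasurableSet A) => ae_zero_or_one_of_midpoint_extreme
      (fun P₁ h₁ P₂ h₂ => hext P₁ h₁ P₂ h₂ _ _ ENNReal.inv_two_add_inv_two (by simp) (by simp)) hA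
    obtain ⟨g, hg, hκg⟩ := κ.exists_measurable_ae_eq_dirac
      (κ.ae_exists_eq_dirac_of_ae_zero_or_one h01)
    exact ⟨g, hg, map_swap_compProd_eq_map_graph hg hκg⟩
  · rintro ⟨g, hg, rfl⟩
    refine ⟨map_graph_mem_fixedMarginalSet hg, fun P₁ h₁ P₂ h₂ a b hab ha hb h => ?_⟩
    rw [eq_map_graph_of_eq_smul_add_smul hg h₁ ha h,
      eq_map_graph_of_eq_smul_add_smul hg h₂ hb (h.trans (add_comm _ _))]

/-- Borkar's representation: the set `ℛ` of probability measures on `U × Y` with fixed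
`Y`-marginal `Q` is convex, and its extreme points are exactly the measures induced by
deterministic policies, i.e. pushforwards of `Q` under `y ↦ (g y, y)` for measurable
`g : Y → U`. -/
theorem fixedMarginal_convex_and_extreme_points
    {U Y : Type*} [MeasurableSpace U] [StandardBorelSpace U]
    [MeasurableSpace Y] [StandardBorelSpace Y]
    (Q : Measure Y) [IsProbabilityMeasure Q] :
    (∀ P₁ ∈ fixedMarginalSet U Y Q, ∀ P₂ ∈ fixedMarginalSet U Y Q,
        ∀ a b : ℝ≥0∞, a + b = 1 → a • P₁ + b • P₂ ∈ fixedMarginalSet U Y Q) ∧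
    {P ∈ fixedMarginalSet U Y Q |
        ∀ P₁ ∈ fixedMarginalSet U Y Q, ∀ P₂ ∈ fixedMarginalSet U Y Q,
          ∀ a b : ℝ≥0∞, a + b = 1 → a ≠ 0 → b ≠ 0 → P = a • P₁ + b • P₂ → P₁ = P₂}
      = {P | ∃ g : Y → U, Measurable g ∧ P = Measure.map (fun y => (g y, y)) Q} :=
  fixedMarginal_convex_and_extreme_points_general Q
end

section
/- Let S be a Polish space, let μ_n be probability measures on S converging weakly to μ, and let f_n : S → ℝ be measurable functions uniformly bounded by M such that f_n converges continuously to f (i.e., f_n(a_n) → f(a) whenever a_n → a in S). Then ∫ f_n dμ_n → ∫ f dμ. -/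
/-!
Continuous convergence `f n (a n) → flim a` is convergence of `(n, x) ↦ f n x` along
`atTop ×ˢ 𝓝 a`; hence `flim` is continuous and `f n → flim` locally uniformly, so uniformly on
compact sets. A weakly convergent sequence of probability measures on a Polish space is tight, so
up to an arbitrarily small mass every `μn n` lives on one compact set, where `f n - flim` is
uniformly small: thus `∫ (f n - flim) dμn → 0`, while `∫ flim dμn → ∫ flim dμ` by weak convergence.
-/

open MeasureTheory Filter Topology Function

section ContinuousConvergence

variable {X Y : Type*} [TopologicalSpace X] [TopologicalSpace Y]

theorem tendsto_extend_atTop_of_strictMono {φ : ℕ → ℕ} (hφ : StrictMono φ) {x : ℕ → X} {a : X}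
    (hx : Tendsto x atTop (𝓝 a)) : Tendsto (extend φ x fun _ ↦ a) atTop (𝓝 a) := by
  intro V hV
  obtain ⟨K, hK⟩ := eventually_atTop.1 (hx.eventually_mem hV)
  refine eventually_atTop.2 ⟨φ K, fun n hn ↦ ?_⟩
  by_cases hn_range : ∃ k, φ k = n
  · obtain ⟨k, rfl⟩ := hn_range
    rw [hφ.injective.extend_apply]
    exact hK k (hφ.le_iff_le.1 hn)
  · rw [extend_apply' _ _ _ hn_range]
    exact mem_of_mem_nhds hV

theorem tendsto_uncurry_prod_nhds_of_forall_seq [FirstCountableTopology X] {f : ℕ → X → Y}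
    {a : X} {y : Y}
    (h : ∀ u : ℕ → X, Tendsto u atTop (𝓝 a) → Tendsto (fun n ↦ f n (u n)) atTop (𝓝 y)) :
    Tendsto (uncurry f) (atTop ×ˢ 𝓝 a) (𝓝 y) := by
  obtain ⟨B, hB⟩ := (𝓝 a).exists_antitone_basis
  refine ((atTop_basis.prod hB.toHasBasis).tendsto_iff (𝓝 y).basis_sets).2 fun U hU ↦ ?_
  by_contra! hbad
  have hfreq : ∀ k, ∃ᶠ n in atTop, ∃ x ∈ B k, f n x ∉ U := fun k ↦
    frequently_atTop.2 fun N ↦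
      let ⟨⟨n, x⟩, ⟨hn, hx⟩, hfx⟩ := hbad (N, k) ⟨trivial, trivial⟩
      ⟨n, hn, x, hx, hfx⟩
  obtain ⟨φ, hφ, hφ_bad⟩ := extraction_forall_of_frequently hfreq
  choose x hxB hxU using hφ_bad
  -- the bad points `x k`, placed at the times `φ k` (and `a` elsewhere), still converge to `a`
  have hu := h _ (tendsto_extend_atTop_of_strictMono hφ (hB.tendsto hxB))
  obtain ⟨k, hk⟩ := ((hu.comp hφ.tendsto_atTop).eventually_mem hU).exists
  simp only [comp_apply, hφ.injective.extend_apply] at hk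
  exact hxU k hk

variable {ι : Type*} {p : Filter ι}

theorem continuous_of_tendsto_uncurry_prod_nhds [RegularSpace Y] [p.NeBot]
    {F : ι → X → Y} {f : X → Y} (h : ∀ a, Tendsto (uncurry F) (p ×ˢ 𝓝 a) (𝓝 (f a))) :
    Continuous f := by
  refine continuous_iff_continuousAt.2 fun a ↦ (closed_nhds_basis (f a)).tendsto_right_iff.2 ?_
  rintro C ⟨hC, hC_closed⟩
  obtain ⟨P, hP, Q, hQ, hPQ⟩ := eventually_prod_iff.1 (h a hC)
  filter_upwards [hQ] with x hx
  have hpt : Tendsto (fun i ↦ F i x) p (𝓝 (f x)) :=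
    (h x).comp (tendsto_id.prodMk tendsto_const_nhds)
  exact hC_closed.mem_of_tendsto hpt (hP.mono fun i hi ↦ hPQ hi hx)

theorem tendstoLocallyUniformly_of_tendsto_uncurry_prod_nhds {Y : Type*} [UniformSpace Y]
    {F : ι → X → Y} {f : X → Y} (hf : Continuous f)
    (h : ∀ a, Tendsto (uncurry F) (p ×ˢ 𝓝 a) (𝓝 (f a))) : TendstoLocallyUniformly F f p :=
  tendstoLocallyUniformly_iff_forall_tendsto.2 fun a ↦
    (((hf.tendsto a).comp tendsto_snd).prodMk_nhds (h a)).mono_right (nhds_le_uniformity (f a))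

end ContinuousConvergence

theorem isTightMeasureSet_range_of_tendsto {X : Type*} [TopologicalSpace X] [PolishSpace X]
    [MeasurableSpace X] [BorelSpace X] {μ : ℕ → ProbabilityMeasure X} {ν : ProbabilityMeasure X}
    (h : Tendsto μ atTop (𝓝 ν)) : IsTightMeasureSet (Set.range fun n ↦ (μ n : Measure X)) := by
  let := TopologicalSpace.upgradeIsCompletelyMetrizable X
  have hcomp := h.isCompact_insert_range
  refine (isTightMeasureSet_of_isCompact_closure (hcomp.isClosed.closure_eq ▸ hcomp)).subset ?_
  rintro _ ⟨n, rfl⟩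
  exact ⟨μ n, Set.mem_insert_of_mem _ ⟨n, rfl⟩, rfl⟩

section Integral

variable {X E : Type*} [MeasurableSpace X] [NormedAddCommGroup E] [NormedSpace ℝ E]

theorem norm_integral_le_add_mul_measureReal_compl {ν : Measure X} [IsProbabilityMeasure ν]
    {g : X → E} (hg : Integrable g ν) {K : Set X} (hK : MeasurableSet K) {ε C : ℝ} (hε : 0 ≤ ε)
    (hgK : ∀ x ∈ K, ‖g x‖ ≤ ε) (hgC : ∀ x, ‖g x‖ ≤ C) :
    ‖∫ x, g x ∂ν‖ ≤ ε + C * ν.real Kᶜ := by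
  rw [← integral_add_compl hK hg]
  calc ‖(∫ x in K, g x ∂ν) + ∫ x in Kᶜ, g x ∂ν‖
      ≤ ‖∫ x in K, g x ∂ν‖ + ‖∫ x in Kᶜ, g x ∂ν‖ := norm_add_le _ _
    _ ≤ ε * ν.real K + C * ν.real Kᶜ :=
        add_le_add (norm_setIntegral_le_of_norm_le_const (measure_lt_top _ _) hgK)
          (norm_setIntegral_le_of_norm_le_const (measure_lt_top _ _) fun x _ ↦ hgC x)
    _ ≤ ε + C * ν.real Kᶜ := by
        gcongr
        exact mul_le_of_le_one_right hε measureReal_le_one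

theorem tendsto_integral_sub_of_tendstoLocallyUniformly [TopologicalSpace X] [T2Space X]
    [OpensMeasurableSpace X] {μ : ℕ → Measure X} [∀ n, IsProbabilityMeasure (μ n)]
    (hμ : IsTightMeasureSet (Set.range μ)) {F : ℕ → X → E} {f : X → E}
    (hmeas : ∀ n, AEStronglyMeasurable (fun x ↦ F n x - f x) (μ n)) {C : ℝ}
    (hC : ∀ n x, ‖F n x - f x‖ ≤ C) (hF : TendstoLocallyUniformly F f atTop) :
    Tendsto (fun n ↦ ∫ x, F n x - f x ∂μ n) atTop (𝓝 0) := by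
  have hC0 : 0 ≤ C := (norm_nonneg _).trans (hC 0 (nonempty_of_isProbabilityMeasure (μ 0)).some)
  refine NormedAddGroup.tendsto_nhds_zero.2 fun ε hε ↦ ?_
  set δ := ε / (2 * (C + 1))
  have hδ : 0 < δ := by positivity
  obtain ⟨K, hK, hμK⟩ := isTightMeasureSet_iff_exists_isCompact_measure_compl_le.1 hμ
    (ENNReal.ofReal δ) (ENNReal.ofReal_pos.2 hδ)
  have hunif := Metric.tendstoUniformlyOn_iff.1
    ((tendstoLocallyUniformlyOn_iff_tendstoUniformlyOn_of_compact hK).1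
      hF.tendstoLocallyUniformlyOn) δ hδ
  filter_upwards [hunif] with n hn
  have hμKn : (μ n).real Kᶜ ≤ δ :=
    ENNReal.toReal_le_of_le_ofReal hδ.le (hμK _ ⟨n, rfl⟩)
  have hest := norm_integral_le_add_mul_measureReal_compl
    (Integrable.of_bound (hmeas n) C (Eventually.of_forall (hC n))) hK.measurableSet hδ.le
    (fun x hx ↦ by rw [← dist_eq_norm, dist_comm]; exact (hn x hx).le) (hC n)
  calc ‖∫ x, F n x - f x ∂μ n‖ ≤ δ + C * δ := hest.trans (by gcongr)
    _ = ε / 2 := by simp only [δ]; field_simp; ring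
    _ < ε := half_lt_self hε

end Integral

/-- Generalized dominated convergence for varying measures (Serfozo): if probability
measures `μn` converge weakly to `μ`, and the uniformly bounded measurable functions
`f n` converge continuously to `flim`, then `∫ f n dμn → ∫ flim dμ`. -/
theorem serfozo_generalized_dominated_convergence
    {S : Type*} [TopologicalSpace S] [PolishSpace S] [MeasurableSpace S] [BorelSpace S]
    (μn : ℕ → Measure S) (μ : Measure S)
    [∀ n, IsProbabilityMeasure (μn n)] [IsProbabilityMeasure μ]
    (hweak : ∀ g : BoundedContinuousFunction S ℝ,
      Tendsto (fun n => ∫ x, g x ∂(μn n)) atTop (nhds (∫ x, g x ∂μ)))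
    (f : ℕ → S → ℝ) (flim : S → ℝ) (hf : ∀ n, Measurable (f n))
    (M : ℝ) (hbd : ∀ n x, |f n x| ≤ M)
    (hcont : ∀ (a : S) (a' : ℕ → S), Tendsto a' atTop (nhds a) →
      Tendsto (fun n => f n (a' n)) atTop (nhds (flim a))) :
    Tendsto (fun n => ∫ x, f n x ∂(μn n)) atTop (nhds (∫ x, flim x ∂μ)) := by
  have hjoint a := tendsto_uncurry_prod_nhds_of_forall_seq (hcont a)
  have hflim : Continuous flim := continuous_of_tendsto_uncurry_prod_nhds hjoint
  have hbd_lim x : |flim x| ≤ M :=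
    le_of_tendsto ((hcont x _ tendsto_const_nhds).abs) (Eventually.of_forall fun n ↦ hbd n x)
  have htight : IsTightMeasureSet (Set.range μn) :=
    isTightMeasureSet_range_of_tendsto (μ := fun n ↦ ⟨μn n, inferInstance⟩)
      (ν := ⟨μ, inferInstance⟩) (ProbabilityMeasure.tendsto_iff_forall_integral_tendsto.2 hweak)
  have hdiff := tendsto_integral_sub_of_tendstoLocallyUniformly htight
    (fun n ↦ ((hf n).sub hflim.measurable).aestronglyMeasurable) (C := M + M)
    (fun n x ↦ (abs_sub _ _).trans (add_le_add (hbd n x) (hbd_lim x)))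
    (tendstoLocallyUniformly_of_tendsto_uncurry_prod_nhds hflim hjoint)
  have hlim : Tendsto (fun n ↦ ∫ x, flim x ∂μn n) atTop (𝓝 (∫ x, flim x ∂μ)) :=
    hweak (.ofNormedAddCommGroup flim hflim M hbd_lim)
  have hint {g : S → ℝ} (hg : Measurable g) (hgM : ∀ x, |g x| ≤ M) n : Integrable g (μn n) :=
    .of_bound hg.aestronglyMeasurable M (.of_forall hgM)
  refine (zero_add (∫ x, flim x ∂μ) ▸ hdiff.add hlim).congr fun n ↦ ?_
  rw [integral_sub (hint (hf n) (hbd n) n) (hint hflim.measurable hbd_lim n), sub_add_cancel]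
end
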